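/- Set σ = sup{‖p − a‖ : p ∈ supp μ} (so σ < ρ). For every x ∈ B̄(a,ρ) with H(x) ≠ 0, the exit time r_x = sup{t ∈ [0,2ρ] : x − t·H(x)/‖H(x)‖ ∈ B̄(a,ρ)} satisfies r_x ≥ (ρ − σ)/2. -/

import Mathlib

/-!
Write `u = H(x)/‖H(x)‖` and `t = (ρ - σ)/2`. If `‖x - a‖ + t ≤ ρ`, the point `x - t u` stays in
the ball by the triangle inequality. Otherwise `‖x - a‖ ≥ σ + t`, so for every support point `p`
the unit vector `(x - p)/‖x - p‖` has component at least `(‖x - a‖ - σ)/2 ≥ t/2` along `x - a`.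
Averaging over `μ` and using `‖H(x)‖ ≤ 1` gives `2⟪x - a, u⟫ ≥ t`, hence
`‖x - a - t u‖² = ‖x - a‖² - t (2⟪x - a, u⟫ - t) ≤ ‖x - a‖² ≤ ρ²`.
-/

open MeasureTheory Metric
open scoped RealInnerProductSpace

variable {E : Type*} [NormedAddCommGroup E] [InnerProductSpace ℝ E]

theorem norm_sub_smul_le_norm_of_mul_norm_sq_le_two_inner {y u : E} {t : ℝ} (ht : 0 ≤ t)
    (h : t * ‖u‖ ^ 2 ≤ 2 * ⟪y, u⟫) : ‖y - t • u‖ ≤ ‖y‖ := by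
  refine (sq_le_sq₀ (norm_nonneg _) (norm_nonneg _)).1 ?_
  rw [norm_sub_sq_real, real_inner_smul_right, norm_smul, Real.norm_of_nonneg ht]
  nlinarith

theorem sub_div_two_le_inner_inv_norm_smul_sub {a x p : E} {σ : ℝ} (hp : ‖p - a‖ ≤ σ)
    (hσx : σ ≤ ‖x - a‖) : (‖x - a‖ - σ) / 2 ≤ ⟪x - a, ‖x - p‖⁻¹ • (x - p)⟫ := by
  rcases eq_or_ne x p with rfl | hxp
  · simp only [sub_self, smul_zero, inner_zero_right]
    linarith
  have hpos : 0 < ‖x - p‖ := norm_pos_iff.2 (sub_ne_zero.2 hxp)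
  have hdist : ‖x - p‖ ≤ 2 * ‖x - a‖ := by
    have := norm_sub_le (x - a) (p - a)
    rw [sub_sub_sub_cancel_right] at this
    linarith
  have hinner : ‖x - a‖ * (‖x - a‖ - σ) ≤ ⟪x - a, x - p⟫ := by
    have hsplit : ⟪x - a, x - p⟫ = ‖x - a‖ ^ 2 - ⟪x - a, p - a⟫ := by
      rw [← real_inner_self_eq_norm_sq, ← inner_sub_right, sub_sub_sub_cancel_right]
    have := real_inner_le_norm (x - a) (p - a)
    nlinarith [norm_nonneg (x - a)]
  rw [real_inner_smul_right, ← div_eq_inv_mul, le_div_iff₀ hpos]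
  calc (‖x - a‖ - σ) / 2 * ‖x - p‖ ≤ (‖x - a‖ - σ) / 2 * (2 * ‖x - a‖) :=
        mul_le_mul_of_nonneg_left hdist (by linarith)
    _ = ‖x - a‖ * (‖x - a‖ - σ) := by ring
    _ ≤ ⟪x - a, x - p⟫ := hinner

theorem inner_le_inner_inv_norm_smul {y v : E} (h : 0 ≤ ⟪y, v⟫) (hv : ‖v‖ ≤ 1) :
    ⟪y, v⟫ ≤ ⟪y, ‖v‖⁻¹ • v⟫ := by
  rcases eq_or_ne v 0 with rfl | hv0
  · simp
  rw [real_inner_smul_right]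
  exact le_mul_of_one_le_left h ((one_le_inv₀ (norm_pos_iff.2 hv0)).2 hv)

section
variable [MeasurableSpace E]

/-- The paper's `H`: the gradient of `x ↦ ∫ ‖x - p‖ dμ(p)` wherever `μ` has no atom. -/
noncomputable def meanDirection (μ : Measure E) (x : E) : E :=
  ∫ p, ‖x - p‖⁻¹ • (x - p) ∂μ

theorem setIntegral_compl_singleton_eq_meanDirection (μ : Measure E) (x : E) :
    ∫ p in ({x}ᶜ : Set E), ‖x - p‖⁻¹ • (x - p) ∂μ = meanDirection μ x :=
  setIntegral_eq_integral_of_forall_compl_eq_zero fun p hp => by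
    rw [Set.notMem_compl_iff, Set.mem_singleton_iff] at hp
    simp [hp]

theorem norm_meanDirection_le_one (μ : Measure E) [IsProbabilityMeasure μ] (x : E) :
    ‖meanDirection μ x‖ ≤ 1 := by
  simpa [meanDirection] using norm_integral_le_of_norm_le_const (μ := μ) (C := 1)
    (.of_forall fun p => mem_closedBall_zero_iff.1 (inv_norm_smul_mem_unitClosedBall (x - p)))

variable [BorelSpace E] [SecondCountableTopology E]

theorem integrable_inv_norm_smul_sub (μ : Measure E) [IsFiniteMeasure μ] (x : E) :
    Integrable (fun p => ‖x - p‖⁻¹ • (x - p)) μ :=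
  (integrable_const (1 : ℝ)).mono' (by fun_prop)
    (.of_forall fun p => by
      simpa using mem_closedBall_zero_iff.1 (inv_norm_smul_mem_unitClosedBall (x - p)))

theorem sub_div_two_le_inner_meanDirection [CompleteSpace E] (μ : Measure E)
    [IsProbabilityMeasure μ] {a x : E} {σ : ℝ} (hμ : ∀ᵐ p ∂μ, ‖p - a‖ ≤ σ) (hσx : σ ≤ ‖x - a‖) :
    (‖x - a‖ - σ) / 2 ≤ ⟪x - a, meanDirection μ x⟫ := by
  rw [meanDirection, ← integral_inner (integrable_inv_norm_smul_sub μ x)]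
  calc (‖x - a‖ - σ) / 2 = ∫ _, (‖x - a‖ - σ) / 2 ∂μ := by simp
    _ ≤ ∫ p, ⟪x - a, ‖x - p‖⁻¹ • (x - p)⟫ ∂μ :=
      integral_mono_ae (integrable_const _) ((integrable_inv_norm_smul_sub μ x).const_inner _)
        (hμ.mono fun p hp => sub_div_two_le_inner_inv_norm_smul_sub hp hσx)

theorem sub_smul_inv_norm_smul_meanDirection_mem_closedBall [CompleteSpace E] (μ : Measure E)
    [IsProbabilityMeasure μ] {a x : E} {σ ρ : ℝ} (hμ : ∀ᵐ p ∂μ, p ∈ closedBall a σ)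
    (hσρ : σ ≤ ρ) (hx : x ∈ closedBall a ρ) (hH : meanDirection μ x ≠ 0) :
    x - ((ρ - σ) / 2) • (‖meanDirection μ x‖⁻¹ • meanDirection μ x) ∈ closedBall a ρ := by
  set v := meanDirection μ x
  set t := (ρ - σ) / 2 with ht_def
  have hu : ‖‖v‖⁻¹ • v‖ = 1 := norm_smul_inv_norm hH
  have ht : 0 ≤ t := by linarith
  rw [mem_closedBall_iff_norm] at hx ⊢
  rw [sub_right_comm]
  by_cases hnear : ‖x - a‖ + t ≤ ρ
  · calc ‖x - a - t • (‖v‖⁻¹ • v)‖ ≤ ‖x - a‖ + ‖t • (‖v‖⁻¹ • v)‖ := norm_sub_le _ _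
      _ = ‖x - a‖ + t := by rw [norm_smul, hu, Real.norm_of_nonneg ht, mul_one]
      _ ≤ ρ := hnear
  have hv : (‖x - a‖ - σ) / 2 ≤ ⟪x - a, v⟫ :=
    sub_div_two_le_inner_meanDirection μ (hμ.mono fun p => mem_closedBall_iff_norm.1)
      (by linarith)
  have hinner : t ≤ 2 * ⟪x - a, ‖v‖⁻¹ • v⟫ := by
    have := inner_le_inner_inv_norm_smul (y := x - a) (v := v) (by linarith)
      (norm_meanDirection_le_one μ x)
    linarith
  calc ‖x - a - t • (‖v‖⁻¹ • v)‖ ≤ ‖x - a‖ :=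
        norm_sub_smul_le_norm_of_mul_norm_sq_le_two_inner ht (by rwa [hu, one_pow, mul_one])
    _ ≤ ρ := hx

end

theorem stmt16_general {n : ℕ} (a : EuclideanSpace ℝ (Fin n)) (ρ : ℝ)
    (μ : Measure (EuclideanSpace ℝ (Fin n))) [IsProbabilityMeasure μ]
    (hsupp : {x : EuclideanSpace ℝ (Fin n) | ∀ U ∈ nhds x, 0 < μ U} ⊆ ball a ρ)
    (H : EuclideanSpace ℝ (Fin n) → EuclideanSpace ℝ (Fin n))
    (hH : ∀ x, H x = ∫ p in ({x}ᶜ : Set (EuclideanSpace ℝ (Fin n))), ‖x - p‖⁻¹ • (x - p) ∂μ)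
    (σ : ℝ)
    (hσ : σ = sSup ((fun p => ‖p - a‖) '' {x : EuclideanSpace ℝ (Fin n) | ∀ U ∈ nhds x, 0 < μ U}))
    (x : EuclideanSpace ℝ (Fin n)) (hx : x ∈ closedBall a ρ) (hHx : H x ≠ 0)
    (r : ℝ)
    (hr : r = sSup {t ∈ Set.Icc (0 : ℝ) (2 * ρ) | x - (t / ‖H x‖) • H x ∈ closedBall a ρ}) :
    r ≥ (ρ - σ) / 2 := by
  have hρ : 0 ≤ ρ := nonempty_closedBall.1 ⟨x, hx⟩
  have hS : {p | ∀ U ∈ nhds p, 0 < μ U} = μ.support :=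
    Set.ext fun p => (μ.mem_support_iff_forall p).symm
  rw [hS] at hsupp hσ
  rw [hH, setIntegral_compl_singleton_eq_meanDirection] at hHx hr
  have hρ_bound : ρ ∈ upperBounds ((fun p => ‖p - a‖) '' μ.support) := by
    rintro _ ⟨p, hp, rfl⟩
    exact (mem_ball_iff_norm.1 (hsupp hp)).le
  have hσ0 : 0 ≤ σ := hσ ▸ Real.sSup_nonneg (by rintro _ ⟨p, -, rfl⟩; positivity)
  have hσρ : σ ≤ ρ := hσ ▸ Real.sSup_le hρ_bound hρ
  have hμσ : ∀ᵐ p ∂μ, p ∈ closedBall a σ := by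
    filter_upwards [μ.support_mem_ae] with p hp
    exact mem_closedBall_iff_norm.2 (hσ ▸ le_csSup ⟨ρ, hρ_bound⟩ ⟨p, hp, rfl⟩)
  have hexit : x - ((ρ - σ) / 2 / ‖meanDirection μ x‖) • meanDirection μ x ∈ closedBall a ρ := by
    rw [div_eq_mul_inv, mul_smul]
    exact sub_smul_inv_norm_smul_meanDirection_mem_closedBall μ hμσ hσρ hx hHx
  exact hr ▸ le_csSup ⟨2 * ρ, fun t ht => ht.1.2⟩ ⟨⟨by linarith, by linarith⟩, hexit⟩

/-- Euclidean case of Lemma 4.9, uniform lower bound on stepsizes.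
With `σ = sup{‖p-a‖ : p ∈ supp μ}`, for every `x ∈ B̄(a,ρ)` with `H x ≠ 0`, the exit
time `r_x = sup{t ∈ [0,2ρ] : x - t H(x)/‖H(x)‖ ∈ B̄(a,ρ)}` satisfies `r_x ≥ (ρ-σ)/2`. -/
theorem stmt16 {n : ℕ} (hn : 1 ≤ n) (a : EuclideanSpace ℝ (Fin n)) (ρ : ℝ) (hρ : 0 < ρ)
    (μ : Measure (EuclideanSpace ℝ (Fin n))) [IsProbabilityMeasure μ]
    (hsupp : {x : EuclideanSpace ℝ (Fin n) | ∀ U ∈ nhds x, 0 < μ U} ⊆ ball a ρ)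
    (H : EuclideanSpace ℝ (Fin n) → EuclideanSpace ℝ (Fin n))
    (hH : ∀ x, H x = ∫ p in ({x}ᶜ : Set (EuclideanSpace ℝ (Fin n))), ‖x - p‖⁻¹ • (x - p) ∂μ)
    (σ : ℝ)
    (hσ : σ = sSup ((fun p => ‖p - a‖) '' {x : EuclideanSpace ℝ (Fin n) | ∀ U ∈ nhds x, 0 < μ U}))
    (x : EuclideanSpace ℝ (Fin n)) (hx : x ∈ closedBall a ρ) (hHx : H x ≠ 0)
    (r : ℝ)
    (hr : r = sSup {t ∈ Set.Icc (0 : ℝ) (2 * ρ) | x - (t / ‖H x‖) • H x ∈ closedBall a ρ}) :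
    r ≥ (ρ - σ) / 2 :=
  stmt16_general a ρ μ hsupp H hH σ hσ x hx hHx r hr
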